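/- Let Z be a real separable Hilbert space and let (ψ̃_j)_{j∈ℕ} be a frame for Z with frame bounds 0 < λ ≤ Λ, i.e. λ²‖z‖² ≤ Σ_{j∈ℕ} ⟨z, ψ̃_j⟩² ≤ Λ²‖z‖² for all z ∈ Z. Let (w_j)_{j∈ℕ} ⊆ (0,1] and s ≥ 0. Define Z^s := { z ∈ Z : Σ_{j∈ℕ} ⟨z, ψ̃_j⟩² w_j^{−2s} < ∞ } with inner product ⟨z, z′⟩_{Z^s} := Σ_{j∈ℕ} ⟨z, ψ̃_j⟩⟨z′, ψ̃_j⟩ w_j^{−2s}. Then ⟨·,·⟩_{Z^s} is a well-defined inner product on Z^s (in particular the defining series converges absolutely), the norm it induces satisfies ‖z‖_Z ≤ λ^{−1}‖z‖_{Z^s} for all z ∈ Z^s, and Z^s equipped with this inner product is complete, hence a Hilbert space. -/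

import Mathlib

/-!
Write `W_j = w_j^{-2s}`; since `w_j ∈ (0,1]` and `s ≥ 0` we have `W_j ≥ 1`, so the `Z^s`-norm
dominates the frame sum and the lower frame bound gives `λ ‖z‖ ≤ ‖z‖_{Z^s}`. A Cauchy sequence
in `Z^s` is therefore Cauchy in `Z` and converges there to some `z`. Its frame coefficients
converge coordinatewise, so finite partial sums of the `Z^s`-norm pass to the limit (Fatou's
lemma for series), which shows both `z ∈ Z^s` and convergence in `Z^s`.
-/

open Filter Topology
open scoped RealInnerProductSpace

section WeightedSquares

variable {ι : Type*} {W : ι → ℝ} {a b : ι → ℝ}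

lemma summable_add_sq_mul (hW : ∀ j, 0 ≤ W j) (ha : Summable fun j => a j ^ 2 * W j)
    (hb : Summable fun j => b j ^ 2 * W j) : Summable fun j => (a j + b j) ^ 2 * W j :=
  ((ha.add hb).mul_left 2).of_nonneg_of_le (fun j => mul_nonneg (sq_nonneg _) (hW j)) fun j => by
    nlinarith [mul_nonneg (sq_nonneg (a j - b j)) (hW j)]

lemma summable_abs_mul_mul (hW : ∀ j, 0 ≤ W j) (ha : Summable fun j => a j ^ 2 * W j)
    (hb : Summable fun j => b j ^ 2 * W j) : Summable fun j => |a j * b j| * W j := by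
  refine (ha.add hb).of_nonneg_of_le (fun j => mul_nonneg (abs_nonneg _) (hW j)) fun j => ?_
  have hab : |a j * b j| ≤ a j ^ 2 + b j ^ 2 := by
    rw [abs_mul, ← sq_abs (a j), ← sq_abs (b j)]
    nlinarith [two_mul_le_add_sq |a j| |b j|, abs_nonneg (a j), abs_nonneg (b j)]
  rw [← add_mul]
  exact mul_le_mul_of_nonneg_right hab (hW j)

lemma summable_and_tsum_le_of_tendsto {α : Type*} {l : Filter α} [l.NeBot] {f : α → ι → ℝ}
    {g : ι → ℝ} {C : ℝ} (hf : ∀ m j, 0 ≤ f m j) (hfs : ∀ m, Summable (f m))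
    (hlim : ∀ j, Tendsto (fun m => f m j) l (𝓝 (g j))) (hC : ∀ᶠ m in l, ∑' j, f m j ≤ C) :
    Summable g ∧ ∑' j, g j ≤ C := by
  have hg : 0 ≤ g := fun j => ge_of_tendsto' (hlim j) fun m => hf m j
  have hsum : ∀ u : Finset ι, ∑ j ∈ u, g j ≤ C := fun u =>
    le_of_tendsto (tendsto_finsetSum u fun j _ => hlim j) <|
      hC.mono fun m hm => ((hfs m).sum_le_tsum u fun j _ => hf m j).trans hm
  exact ⟨summable_of_sum_le hg hsum, Real.tsum_le_of_sum_le hg hsum⟩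

lemma le_inv_mul_sqrt_of_sq_mul_sq_le {lam x T : ℝ} (hlam : 0 < lam)
    (h : lam ^ 2 * x ^ 2 ≤ T) : x ≤ lam⁻¹ * √T := by
  rw [← div_eq_inv_mul, le_div_iff₀' hlam]
  exact Real.le_sqrt_of_sq_le (by rwa [mul_pow])

end WeightedSquares

section FrameScale

variable {Z ι : Type*} [NormedAddCommGroup Z] [InnerProductSpace ℝ Z]

/-- The paper's `Z^s` is `frameScale ψ (fun j => w j ^ (-(2 * s)))`. -/
def frameScale (ψ : ι → Z) (W : ι → ℝ) (hW : ∀ j, 0 ≤ W j) : Submodule ℝ Z where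
  carrier := {z | Summable fun j => ⟪z, ψ j⟫ ^ 2 * W j}
  add_mem' {z z'} hz hz' := by
    simpa only [Set.mem_ofPred_eq, inner_add_left] using summable_add_sq_mul hW hz hz'
  zero_mem' := by simp
  smul_mem' c z hz := by
    simpa only [Set.mem_ofPred_eq, real_inner_smul_left, mul_pow, mul_assoc] using
      hz.mul_left (c ^ 2)

variable {ψ : ι → Z} {W : ι → ℝ} {hW : ∀ j, 0 ≤ W j} {lam : ℝ}

lemma sq_mul_norm_sq_le_tsum_sq_mul (hW1 : ∀ j, 1 ≤ W j)
    (hlow : ∀ z : Z, lam ^ 2 * ‖z‖ ^ 2 ≤ ∑' j, ⟪z, ψ j⟫ ^ 2) {z : Z}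
    (hz : z ∈ frameScale ψ W hW) : lam ^ 2 * ‖z‖ ^ 2 ≤ ∑' j, ⟪z, ψ j⟫ ^ 2 * W j := by
  have hle : ∀ j, ⟪z, ψ j⟫ ^ 2 ≤ ⟪z, ψ j⟫ ^ 2 * W j := fun j =>
    le_mul_of_one_le_right (sq_nonneg _) (hW1 j)
  exact (hlow z).trans <|
    (hz.of_nonneg_of_le (fun j => sq_nonneg _) hle).tsum_le_tsum hle hz

lemma cauchySeq_of_tsum_sq_mul_lt (hlam : 0 < lam)
    (hnorm : ∀ z ∈ frameScale ψ W hW, lam ^ 2 * ‖z‖ ^ 2 ≤ ∑' j, ⟪z, ψ j⟫ ^ 2 * W j)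
    {u : ℕ → Z} (hu : ∀ n, u n ∈ frameScale ψ W hW)
    (hC : ∀ ε > (0 : ℝ), ∃ N : ℕ, ∀ m ≥ N, ∀ n ≥ N, ∑' j, ⟪u m - u n, ψ j⟫ ^ 2 * W j < ε) :
    CauchySeq u := by
  refine Metric.cauchySeq_iff.2 fun ε hε => ?_
  obtain ⟨N, hN⟩ := hC ((lam * ε) ^ 2) (by positivity)
  refine ⟨N, fun m hm n hn => ?_⟩
  have hsq : (lam * ‖u m - u n‖) ^ 2 < (lam * ε) ^ 2 := by
    rw [mul_pow]
    exact (hnorm _ (sub_mem (hu m) (hu n))).trans_lt (hN m hm n hn)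
  rw [dist_eq_norm]
  exact lt_of_mul_lt_mul_left ((pow_lt_pow_iff_left₀ (by positivity) (by positivity)
    two_ne_zero).1 hsq) hlam.le

theorem exists_mem_frameScale_tendsto [CompleteSpace Z] (hlam : 0 < lam)
    (hnorm : ∀ z ∈ frameScale ψ W hW, lam ^ 2 * ‖z‖ ^ 2 ≤ ∑' j, ⟪z, ψ j⟫ ^ 2 * W j)
    {u : ℕ → Z} (hu : ∀ n, u n ∈ frameScale ψ W hW)
    (hC : ∀ ε > (0 : ℝ), ∃ N : ℕ, ∀ m ≥ N, ∀ n ≥ N, ∑' j, ⟪u m - u n, ψ j⟫ ^ 2 * W j < ε) :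
    ∃ z ∈ frameScale ψ W hW, ∀ ε > (0 : ℝ), ∃ N : ℕ, ∀ n ≥ N,
      ∑' j, ⟪u n - z, ψ j⟫ ^ 2 * W j < ε := by
  obtain ⟨z, hz⟩ := cauchySeq_tendsto_of_complete (cauchySeq_of_tsum_sq_mul_lt hlam hnorm hu hC)
  have hlim : ∀ ε > (0 : ℝ), ∃ N : ℕ, ∀ n ≥ N,
      z - u n ∈ frameScale ψ W hW ∧ ∑' j, ⟪z - u n, ψ j⟫ ^ 2 * W j ≤ ε := by
    intro ε hε
    obtain ⟨N, hN⟩ := hC ε hε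
    refine ⟨N, fun n hn => summable_and_tsum_le_of_tendsto
      (fun m j => mul_nonneg (sq_nonneg _) (hW j)) (fun m => sub_mem (hu m) (hu n))
      (fun j => (((hz.sub_const (u n)).inner tendsto_const_nhds).pow 2).mul_const (W j))
      (eventually_atTop.2 ⟨N, fun m hm => (hN m hm n hn).le⟩)⟩
  obtain ⟨N₀, hN₀⟩ := hlim 1 one_pos
  have hz_mem : z ∈ frameScale ψ W hW := by
    simpa using add_mem (hN₀ N₀ le_rfl).1 (hu N₀)
  refine ⟨z, hz_mem, fun ε hε => ?_⟩
  obtain ⟨N, hN⟩ := hlim (ε / 2) (half_pos hε)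
  refine ⟨N, fun n hn => ?_⟩
  simp only [← neg_sub z (u n), inner_neg_left, neg_sq]
  linarith [(hN n hn).2]

end FrameScale

theorem stmt_8_general {Z : Type*}
    [NormedAddCommGroup Z] [InnerProductSpace ℝ Z] [CompleteSpace Z]
    (ψ : ℕ → Z) (lam : ℝ) (hlam : 0 < lam)
    (hlow : ∀ z : Z, lam ^ 2 * ‖z‖ ^ 2 ≤ ∑' j, (inner ℝ z (ψ j) : ℝ) ^ 2)
    (w : ℕ → ℝ) (hw : ∀ j, 0 < w j ∧ w j ≤ 1) (s : ℝ) (hs : 0 ≤ s)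
    (S : Set Z)
    (hS : S = {z : Z | Summable fun j => (inner ℝ z (ψ j) : ℝ) ^ 2 * w j ^ (-(2 * s))}) :
    (∀ z ∈ S, ∀ z' ∈ S, z + z' ∈ S) ∧
    (∀ c : ℝ, ∀ z ∈ S, c • z ∈ S) ∧
    (∀ z ∈ S, ∀ z' ∈ S,
      Summable fun j => |(inner ℝ z (ψ j) : ℝ) * (inner ℝ z' (ψ j) : ℝ)| * w j ^ (-(2 * s))) ∧
    (∀ z ∈ S,
      ‖z‖ ≤ lam⁻¹ * Real.sqrt (∑' j, (inner ℝ z (ψ j) : ℝ) ^ 2 * w j ^ (-(2 * s)))) ∧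
    (∀ u : ℕ → Z, (∀ n, u n ∈ S) →
      (∀ ε > (0 : ℝ), ∃ N : ℕ, ∀ m ≥ N, ∀ n ≥ N,
        ∑' j, (inner ℝ (u m - u n) (ψ j) : ℝ) ^ 2 * w j ^ (-(2 * s)) < ε) →
      ∃ z ∈ S, ∀ ε > (0 : ℝ), ∃ N : ℕ, ∀ n ≥ N,
        ∑' j, (inner ℝ (u n - z) (ψ j) : ℝ) ^ 2 * w j ^ (-(2 * s)) < ε) := by
  have hW1 : ∀ j, 1 ≤ w j ^ (-(2 * s)) := fun j =>
    Real.one_le_rpow_of_pos_of_le_one_of_nonpos (hw j).1 (hw j).2 (by linarith)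
  have hW0 : ∀ j, 0 ≤ w j ^ (-(2 * s)) := fun j => zero_le_one.trans (hW1 j)
  have hS' : S = (frameScale ψ _ hW0 : Set Z) := hS
  subst hS'
  have hnorm := fun z (hz : z ∈ frameScale ψ _ hW0) => sq_mul_norm_sq_le_tsum_sq_mul hW1 hlow hz
  exact ⟨fun z hz z' hz' => add_mem hz hz', fun c z hz => Submodule.smul_mem _ c hz,
    fun z hz z' hz' => summable_abs_mul_mul hW0 hz hz',
    fun z hz => le_inv_mul_sqrt_of_sq_mul_sq_le hlam (hnorm z hz),
    fun u hu hC => exists_mem_frameScale_tendsto hlam hnorm hu hC⟩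

/-- **The smoothness scale `Z^s` is a Hilbert space.**
Let `(ψ̃_j)` be a frame for the real separable Hilbert space `Z` with frame bounds
`0 < λ ≤ Λ`, let `(w_j) ⊆ (0,1]` and `s ≥ 0`, and let
`Z^s = { z : Σ_j ⟨z, ψ̃_j⟩² w_j^{−2s} < ∞ }` with inner product
`⟨z,z'⟩_{Z^s} = Σ_j ⟨z, ψ̃_j⟩⟨z', ψ̃_j⟩ w_j^{−2s}`.  Then `Z^s` is a linear subspace on
which the defining series converges absolutely, the induced norm dominates the `Z`-norm
via `‖z‖_Z ≤ λ⁻¹ ‖z‖_{Z^s}`, and `Z^s` is complete, hence a Hilbert space. -/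
theorem stmt_8 {Z : Type*}
    [NormedAddCommGroup Z] [InnerProductSpace ℝ Z] [CompleteSpace Z]
    [TopologicalSpace.SeparableSpace Z]
    (ψ : ℕ → Z) (lam Λ : ℝ) (hlam : 0 < lam) (hlamΛ : lam ≤ Λ)
    (hsum : ∀ z : Z, Summable fun j => (inner ℝ z (ψ j) : ℝ) ^ 2)
    (hlow : ∀ z : Z, lam ^ 2 * ‖z‖ ^ 2 ≤ ∑' j, (inner ℝ z (ψ j) : ℝ) ^ 2)
    (hup : ∀ z : Z, ∑' j, (inner ℝ z (ψ j) : ℝ) ^ 2 ≤ Λ ^ 2 * ‖z‖ ^ 2)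
    (w : ℕ → ℝ) (hw : ∀ j, 0 < w j ∧ w j ≤ 1) (s : ℝ) (hs : 0 ≤ s)
    (S : Set Z)
    (hS : S = {z : Z | Summable fun j => (inner ℝ z (ψ j) : ℝ) ^ 2 * w j ^ (-(2 * s))}) :
    (∀ z ∈ S, ∀ z' ∈ S, z + z' ∈ S) ∧
    (∀ c : ℝ, ∀ z ∈ S, c • z ∈ S) ∧
    (∀ z ∈ S, ∀ z' ∈ S,
      Summable fun j => |(inner ℝ z (ψ j) : ℝ) * (inner ℝ z' (ψ j) : ℝ)| * w j ^ (-(2 * s))) ∧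
    (∀ z ∈ S,
      ‖z‖ ≤ lam⁻¹ * Real.sqrt (∑' j, (inner ℝ z (ψ j) : ℝ) ^ 2 * w j ^ (-(2 * s)))) ∧
    (∀ u : ℕ → Z, (∀ n, u n ∈ S) →
      (∀ ε > (0 : ℝ), ∃ N : ℕ, ∀ m ≥ N, ∀ n ≥ N,
        ∑' j, (inner ℝ (u m - u n) (ψ j) : ℝ) ^ 2 * w j ^ (-(2 * s)) < ε) →
      ∃ z ∈ S, ∀ ε > (0 : ℝ), ∃ N : ℕ, ∀ n ≥ N,
        ∑' j, (inner ℝ (u n - z) (ψ j) : ℝ) ^ 2 * w j ^ (-(2 * s)) < ε) :=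
  stmt_8_general ψ lam hlam hlow w hw s hs S hS
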